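/- arXiv:2003.12285 — 2 statements merged into one kernel-verified Lean document; each statement's English description precedes it below -/
import Mathlib

section
/- The simplicial deleted join of the k-skeleton of the (2k+2)-dimensional simplex is Z_2-equivariantly homeomorphic to the sphere S^{2k+1} with the antipodal involution. -/
/- Common infrastructure: spheres with antipodal involution, deleted products,
topological joins and suspensions with induced involutions, abstract simplicial
complexes (as down-closed set systems), geometric realizations, simplicial joins,
deleted joins, cones, skeleta and links. -/

open Metric

noncomputable section

/-- The unit sphere `S^{m-1}` inside `ℝ^m`. -/
def unitSphere (m : ℕ) : Set (EuclideanSpace ℝ (Fin m)) := sphere 0 1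

/-- The antipodal involution on the unit sphere. -/
def sphNeg {m : ℕ} (x : unitSphere m) : unitSphere m :=
  ⟨-x.1, by have h := x.2; simp only [unitSphere, mem_sphere_zero_iff_norm] at h ⊢; simp [h]⟩

/-- The deleted product `X^{×2}_Δ = {(x,y) : x ≠ y}`. -/
abbrev DelProd (X : Type*) [TopologicalSpace X] := {p : X × X // p.1 ≠ p.2}

/-- The coordinate-swapping involution on the deleted product. -/
def delProdSwap {X : Type*} [TopologicalSpace X] (p : DelProd X) : DelProd X :=
  ⟨(p.1.2, p.1.1), Ne.symm p.2⟩

abbrev I01 := unitInterval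

/-- Generating relation for the topological join `X * Y`. -/
def JoinRel (X Y : Type*) : X × Y × I01 → X × Y × I01 → Prop := fun a b =>
  (a.2.2 = 0 ∧ b.2.2 = 0 ∧ a.1 = b.1) ∨ (a.2.2 = 1 ∧ b.2.2 = 1 ∧ a.2.1 = b.2.1)

/-- The topological join `X * Y`; at `t = 0` it is `X`, at `t = 1` it is `Y`. -/
def TopJoin (X Y : Type*) := Quot (JoinRel X Y)

instance (X Y : Type*) [TopologicalSpace X] [TopologicalSpace Y] :
    TopologicalSpace (TopJoin X Y) := by unfold TopJoin; infer_instance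

/-- Generating relation for the unreduced suspension. -/
def SuspRel (X : Type*) : X × I01 → X × I01 → Prop := fun a b =>
  (a.2 = 0 ∧ b.2 = 0) ∨ (a.2 = 1 ∧ b.2 = 1)

/-- The unreduced suspension `Σ X`. -/
def Susp (X : Type*) := Quot (SuspRel X)

instance (X : Type*) [TopologicalSpace X] : TopologicalSpace (Susp X) := by
  unfold Susp; infer_instance

/-- The involution on a join induced by involutions of the two factors. -/
def joinInvol {X Y : Type*} (τ : X → X) (σ : Y → Y) : TopJoin X Y → TopJoin X Y :=
  Quot.lift (fun a => Quot.mk _ (τ a.1, σ a.2.1, a.2.2)) (by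
    rintro a b (⟨h0a, h0b, hx⟩ | ⟨h1a, h1b, hy⟩)
    · exact Quot.sound (Or.inl ⟨h0a, h0b, by rw [hx]⟩)
    · exact Quot.sound (Or.inr ⟨h1a, h1b, by rw [hy]⟩))

/-- The involution on the suspension induced by `τ` together with the flip of the
suspension coordinate. -/
def suspInvol {X : Type*} (τ : X → X) : Susp X → Susp X :=
  Quot.lift (fun a => Quot.mk _ (τ a.1, unitInterval.symm a.2)) (by
    rintro a b (⟨ha, hb⟩ | ⟨ha, hb⟩)
    · exact Quot.sound (Or.inr ⟨by simp [ha], by simp [hb]⟩)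
    · exact Quot.sound (Or.inl ⟨by simp [ha], by simp [hb]⟩))

/-- `K` is an abstract simplicial complex: a set of nonempty finite vertex sets
closed under passing to nonempty subsets. -/
def IsComplex {V : Type*} (K : Set (Finset V)) : Prop :=
  (∀ σ ∈ K, σ.Nonempty) ∧ ∀ σ ∈ K, ∀ τ ⊆ σ, τ.Nonempty → τ ∈ K

/-- Geometric realization of a set system `K` on a finite vertex set `V`, as the
subspace of barycentric-coordinate functions supported on a face of `K`. -/
def realization {V : Type*} [Fintype V] (K : Set (Finset V)) : Set (V → ℝ) :=
  {x | (∀ v, 0 ≤ x v) ∧ ∑ v, x v = 1 ∧ ∃ σ ∈ K, ∀ v, x v ≠ 0 → v ∈ σ}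

/-- `X` admits a topological embedding into `ℝ^d`. -/
def EmbedsIn (X : Type*) [TopologicalSpace X] (d : ℕ) : Prop :=
  ∃ f : X → EuclideanSpace ℝ (Fin d), Topology.IsEmbedding f

/-- Simplicial join of complexes on disjoint vertex sets. -/
def sJoin {V W : Type*} [DecidableEq V] [DecidableEq W] (K : Set (Finset V))
    (L : Set (Finset W)) : Set (Finset (V ⊕ W)) :=
  {s | s.Nonempty ∧ ∃ σ τ, (σ ∈ K ∨ σ = ∅) ∧ (τ ∈ L ∨ τ = ∅) ∧
    s = σ.image Sum.inl ∪ τ.image Sum.inr}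

/-- Simplicial deleted join: joins `σ * τ` of pairs of disjoint simplices. -/
def delJoin {V : Type*} [DecidableEq V] (K : Set (Finset V)) : Set (Finset (V ⊕ V)) :=
  {s | s.Nonempty ∧ ∃ σ τ, (σ ∈ K ∨ σ = ∅) ∧ (τ ∈ K ∨ τ = ∅) ∧ Disjoint σ τ ∧
    s = σ.image Sum.inl ∪ τ.image Sum.inr}

/-- The `k`-skeleton of the simplex on `n` vertices. -/
def skel (n k : ℕ) : Set (Finset (Fin n)) := {σ | σ.Nonempty ∧ σ.card ≤ k + 1}

/-- The cone over `K`, with apex the vertex `none`. -/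
def coneC {V : Type*} [DecidableEq V] (K : Set (Finset V)) : Set (Finset (Option V)) :=
  {s | s.Nonempty ∧ ∃ σ, (σ ∈ K ∨ σ = ∅) ∧ (s = σ.image some ∨ s = insert none (σ.image some))}

/-- Barycentric coordinates of the cone apex. -/
def apexFun (V : Type*) : Option V → ℝ := fun o => o.elim 1 (fun _ => 0)

/-- The link of a vertex `v` in a complex `P`. -/
def link {V : Type*} [DecidableEq V] (P : Set (Finset V)) (v : V) : Set (Finset V) :=
  {σ | σ ∈ P ∧ v ∉ σ ∧ insert v σ ∈ P}

/-- The three-point complex `[3]`. -/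
def pts3 : Set (Finset (Fin 3)) := {s | ∃ i, s = {i}}

/-- The point `[x, y, t]` of the realization of a simplicial join. -/
def jpt {V W : Type*} (x : V → ℝ) (y : W → ℝ) (t : I01) : V ⊕ W → ℝ :=
  Sum.elim (fun v => (1 - (t : ℝ)) * x v) (fun w => (t : ℝ) * y w)

/-!
A point `x` of the deleted join is determined by `d = x ∘ inl - x ∘ inr`: its two halves have
disjoint supports, so they are the positive and negative parts of `d`. Hence the realization is
the set of `d ∈ ℝ^{2k+3}` with `∑ |dᵢ| = 1` having at most `k + 1` positive and at most `k + 1`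
negative entries ("balanced"). Since `2k + 3 > 2(k + 1)`, no nonzero constant can be added to a
balanced vector keeping it balanced, so on balanced vectors the projection
`ℝ^{2k+3} → ℝ^{2k+3}/ℝ·𝟙 ≅ ℝ^{2k+2}` followed by radial projection to `S^{2k+1}` is injective;
it is surjective because subtracting a median balances any vector. A continuous bijection from a
compact space onto a Hausdorff one is a homeomorphism, and the exchange involution acts as
`d ↦ -d`, i.e. antipodally.
-/

open Finset NormedSpace

section Balanced

variable {ι : Type*} [Fintype ι] {k : ℕ}

def IsBalanced (k : ℕ) (d : ι → ℝ) : Prop :=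
  #{i | 0 < d i} ≤ k + 1 ∧ #{i | d i < 0} ≤ k + 1

theorem IsBalanced.zero : IsBalanced k (0 : ι → ℝ) := by
  simp [IsBalanced]

theorem IsBalanced.smul {d : ι → ℝ} (hd : IsBalanced k d) {t : ℝ} (ht : 0 < t) :
    IsBalanced k (t • d) := by
  simpa only [IsBalanced, Pi.smul_apply, smul_pos_iff_of_pos_left ht,
    smul_neg_iff_of_pos_left ht] using hd

theorem le_card_filter_not_of_card_eq {p : ι → Prop} [DecidablePred p]
    (hcard : Fintype.card ι = 2 * k + 3) (hp : #{i | p i} ≤ k + 1) : k + 2 ≤ #{i | ¬p i} := by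
  have := card_filter_add_card_filter_not (s := univ) fun i => p i
  rw [card_univ, hcard] at this
  omega

theorem IsBalanced.const_eq_zero (hcard : Fintype.card ι = 2 * k + 3) {d d' : ι → ℝ} {t c : ℝ}
    (hd : IsBalanced k d) (hd' : IsBalanced k d') (ht : 0 ≤ t) (h : ∀ i, d' i = t * d i + c) :
    c = 0 := by
  by_contra hc
  rcases lt_or_gt_of_ne hc with hc | hc
  · have hsub : ({i | ¬0 < d i} : Finset ι) ⊆ ({i | d' i < 0} : Finset ι) := by
      intro i
      simp only [mem_filter, mem_univ, true_and, not_lt, h]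
      intro hi; nlinarith
    have := card_le_card hsub
    have := le_card_filter_not_of_card_eq hcard hd.1
    have := hd'.2
    omega
  · have hsub : ({i | ¬d i < 0} : Finset ι) ⊆ ({i | 0 < d' i} : Finset ι) := by
      intro i
      simp only [mem_filter, mem_univ, true_and, not_lt, h]
      intro hi; nlinarith
    have := card_le_card hsub
    have := le_card_filter_not_of_card_eq hcard hd.2
    have := hd'.1
    omega

/-- The witness is a median: the least value `u i₀` that is `≥` at least `k + 2` of the values. -/
theorem exists_isBalanced_sub_const (hcard : Fintype.card ι = 2 * k + 3) (u : ι → ℝ) :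
    ∃ m, IsBalanced k (fun i => u i - m) := by
  set T : Finset ι := {i | k + 2 ≤ #{j | u j ≤ u i}}
  have hT : T.Nonempty := by
    have : Nonempty ι := Fintype.card_pos_iff.mp (by omega)
    obtain ⟨i, -, hi⟩ := exists_max_image univ u univ_nonempty
    refine ⟨i, mem_filter.mpr ⟨mem_univ _, ?_⟩⟩
    rw [filter_true_of_mem fun j _ => hi j (mem_univ j), card_univ]
    omega
  obtain ⟨i₀, hi₀T, hi₀⟩ := exists_min_image T u hT
  refine ⟨u i₀, ?_⟩
  simp only [IsBalanced, sub_pos, sub_neg]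
  constructor
  · have := card_filter_add_card_filter_not (s := univ) fun j => u j ≤ u i₀
    simp only [not_le, card_univ, hcard] at this
    have := (mem_filter.mp hi₀T).2
    omega
  · by_contra! hB
    obtain ⟨j₀, hj₀B, hj₀⟩ := exists_max_image {j | u j < u i₀} u (card_pos.mp (by omega))
    have hj₀T : j₀ ∈ T := by
      refine mem_filter.mpr ⟨mem_univ _, hB.trans_le (card_le_card fun j hj => ?_)⟩
      exact mem_filter.mpr ⟨mem_univ _, hj₀ j hj⟩
    exact (hi₀ j₀ hj₀T).not_gt (mem_filter.mp hj₀B).2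

end Balanced

theorem realization_eq_stdSimplex_inter {V : Type*} [Fintype V] (K : Set (Finset V)) :
    realization K = stdSimplex ℝ V ∩ ⋃ σ ∈ K, {x | ∀ v ∉ σ, x v = 0} := by
  ext x
  simp [realization, stdSimplex, not_imp_comm, and_assoc]

theorem isCompact_realization {V : Type*} [Fintype V] (K : Set (Finset V)) :
    IsCompact (realization K) := by
  rw [realization_eq_stdSimplex_inter]
  refine (isCompact_stdSimplex ℝ V).inter_right <| K.toFinite.isClosed_biUnion fun σ _ => ?_
  simp only [Set.ofPred_forall]
  exact isClosed_iInter fun v => isClosed_iInter fun _ => isClosed_eq (continuous_apply v)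
    continuous_const

section DeletedJoin

variable {V : Type*}

def coordDiff (x : V ⊕ V → ℝ) : V → ℝ := fun i => x (.inl i) - x (.inr i)

theorem coordDiff_sum_elim (a b : V → ℝ) : coordDiff (Sum.elim a b) = a - b := rfl

theorem coordDiff_comp_swap (x : V ⊕ V → ℝ) : coordDiff (x ∘ Sum.swap) = -coordDiff x := by
  ext i
  simp [coordDiff]

variable [Fintype V]

theorem sum_sum_elim_posPart_negPart (d : V → ℝ) :
    ∑ v, Sum.elim d⁺ d⁻ v = ∑ i, |d i| := by
  simp [Fintype.sum_sum_type, ← sum_add_distrib, posPart_add_negPart]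

variable [DecidableEq V] {K : Set (Finset V)} {x : V ⊕ V → ℝ}

theorem exists_faces_of_mem_realization_delJoin (hx : x ∈ realization (delJoin K)) :
    ∃ σ τ, (σ ∈ K ∨ σ = ∅) ∧ (τ ∈ K ∨ τ = ∅) ∧ Disjoint σ τ ∧
      (∀ i, x (.inl i) ≠ 0 → i ∈ σ) ∧ (∀ i, x (.inr i) ≠ 0 → i ∈ τ) := by
  obtain ⟨-, -, s, ⟨-, σ, τ, hσ, hτ, hστ, rfl⟩, hsupp⟩ := hx
  refine ⟨σ, τ, hσ, hτ, hστ, fun i hi => ?_, fun i hi => ?_⟩ <;>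
    simpa using hsupp _ hi

theorem sum_elim_posPart_negPart_coordDiff (hx : x ∈ realization (delJoin K)) :
    Sum.elim (coordDiff x)⁺ (coordDiff x)⁻ = x := by
  obtain ⟨σ, τ, -, -, hστ, hσ, hτ⟩ := exists_faces_of_mem_realization_delJoin hx
  have hx0 := hx.1
  have hzero (i : V) : x (.inl i) = 0 ∨ x (.inr i) = 0 := by
    by_contra! h
    exact disjoint_left.mp hστ (hσ i h.1) (hτ i h.2)
  ext (i | i) <;> rcases hzero i with h | h <;>
    simp [coordDiff, h, hx0 (.inl i), hx0 (.inr i)]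

theorem sum_abs_coordDiff (hx : x ∈ realization (delJoin K)) : ∑ i, |coordDiff x i| = 1 := by
  rw [← sum_sum_elim_posPart_negPart, sum_elim_posPart_negPart_coordDiff hx, hx.2.1]

end DeletedJoin

section Skeleton

variable {n k : ℕ}

theorem card_le_of_mem_skel_or_eq_empty {σ : Finset (Fin n)} (h : σ ∈ skel n k ∨ σ = ∅) :
    #σ ≤ k + 1 := by
  rcases h with h | rfl
  exacts [h.2, by simp]

theorem mem_skel_or_eq_empty_of_card_le {σ : Finset (Fin n)} (h : #σ ≤ k + 1) :
    σ ∈ skel n k ∨ σ = ∅ :=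
  σ.eq_empty_or_nonempty.symm.imp (⟨·, h⟩) id

theorem isBalanced_coordDiff {x : Fin n ⊕ Fin n → ℝ}
    (hx : x ∈ realization (delJoin (skel n k))) : IsBalanced k (coordDiff x) := by
  obtain ⟨σ, τ, hσK, hτK, -, hσ, hτ⟩ := exists_faces_of_mem_realization_delJoin hx
  have hx0 := hx.1
  constructor
  · refine (card_le_card fun i hi => hσ i ?_).trans (card_le_of_mem_skel_or_eq_empty hσK)
    have hi : 0 < x (.inl i) - x (.inr i) := (mem_filter.mp hi).2
    exact (by linarith [hx0 (.inr i)] : 0 < x (.inl i)).ne'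
  · refine (card_le_card fun i hi => hτ i ?_).trans (card_le_of_mem_skel_or_eq_empty hτK)
    have hi : x (.inl i) - x (.inr i) < 0 := (mem_filter.mp hi).2
    exact (by linarith [hx0 (.inl i)] : 0 < x (.inr i)).ne'

theorem sum_elim_posPart_negPart_mem_realization {d : Fin n → ℝ} (hd : IsBalanced k d)
    (h1 : ∑ i, |d i| = 1) : Sum.elim d⁺ d⁻ ∈ realization (delJoin (skel n k)) := by
  have hne : ∃ i, d i ≠ 0 := by
    by_contra! h
    simp [h] at h1
  obtain ⟨i₀, hi₀⟩ := hne
  refine ⟨fun v => ?_, (sum_sum_elim_posPart_negPart d).trans h1,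
    ({i | 0 < d i} : Finset _).image Sum.inl ∪ ({i | d i < 0} : Finset _).image Sum.inr,
    ⟨?_, _, _, mem_skel_or_eq_empty_of_card_le hd.1, mem_skel_or_eq_empty_of_card_le hd.2,
      ?_, rfl⟩, ?_⟩
  · cases v <;> simp [posPart_nonneg, negPart_nonneg]
  · rcases hi₀.lt_or_gt with h | h
    · exact ⟨.inr i₀, by simp [h]⟩
    · exact ⟨.inl i₀, by simp [h]⟩
  · exact disjoint_filter.mpr fun i _ h => h.not_gt
  · rintro (i | i) h <;> simp_all

end Skeleton

section DiffLast

variable {m : ℕ}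

def diffLast (m : ℕ) : (Fin (m + 1) → ℝ) →ₗ[ℝ] EuclideanSpace ℝ (Fin m) :=
  (WithLp.linearEquiv 2 ℝ (Fin m → ℝ)).symm.toLinearMap ∘ₗ
    LinearMap.pi fun j =>
      LinearMap.proj (R := ℝ) (φ := fun _ => ℝ) j.castSucc - LinearMap.proj (Fin.last m)

@[simp]
theorem diffLast_apply (d : Fin (m + 1) → ℝ) (j : Fin m) :
    diffLast m d j = d j.castSucc - d (Fin.last m) := rfl

theorem diffLast_sub_const (d : Fin (m + 1) → ℝ) (c : ℝ) :
    diffLast m (fun i => d i - c) = diffLast m d := by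
  ext j
  simp

theorem diffLast_snoc_zero (ζ : EuclideanSpace ℝ (Fin m)) :
    diffLast m (Fin.snoc (fun j => ζ j) 0) = ζ := by
  ext j
  simp

theorem eq_smul_add_of_diffLast_eq_smul {d d' : Fin (m + 1) → ℝ} {t : ℝ}
    (h : diffLast m d' = t • diffLast m d) :
    ∀ i, d' i = t * d i + (d' (Fin.last m) - t * d (Fin.last m)) := by
  refine Fin.lastCases (by ring) fun j => ?_
  have := congr($h j)
  simp only [diffLast_apply, PiLp.smul_apply, smul_eq_mul] at this
  linarith

end DiffLast

section SphereMap

variable {k : ℕ}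

theorem diffLast_ne_zero {d : Fin (2 * k + 3) → ℝ} (hd : IsBalanced k d)
    (h1 : ∑ i, |d i| = 1) : diffLast (2 * k + 2) d ≠ 0 := by
  intro h
  have hconst := eq_smul_add_of_diffLast_eq_smul (d := 0) (t := 0) (by rw [h, zero_smul])
  have hc := IsBalanced.const_eq_zero (Fintype.card_fin _) IsBalanced.zero hd le_rfl hconst
  simp only [Pi.zero_apply, mul_zero, sub_zero, zero_add] at hc hconst
  simp [hconst, hc] at h1

theorem eq_of_normalize_diffLast_eq {d d' : Fin (2 * k + 3) → ℝ} (hd : IsBalanced k d)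
    (hd' : IsBalanced k d') (h1 : ∑ i, |d i| = 1) (h1' : ∑ i, |d' i| = 1)
    (h : normalize (diffLast (2 * k + 2) d) = normalize (diffLast (2 * k + 2) d')) : d = d' := by
  set z := diffLast (2 * k + 2) d
  set z' := diffLast (2 * k + 2) d'
  set t := ‖z'‖ * ‖z‖⁻¹
  have hz' : z' = t • z := by
    rw [← norm_smul_normalize z', ← h, NormedSpace.normalize, smul_smul]
  have hall := eq_smul_add_of_diffLast_eq_smul hz'
  have hc := IsBalanced.const_eq_zero (Fintype.card_fin _) hd hd' (by positivity) hall
  simp only [hc, add_zero] at hall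
  have ht : t = 1 := by
    rw [← h1', ← mul_one t, ← h1, mul_sum]
    simp [hall, abs_mul, abs_of_nonneg (show 0 ≤ t by positivity)]
  ext i
  simp [hall, ht]

def delJoinSkelToSphere (k : ℕ) (x : realization (delJoin (skel (2 * k + 3) k))) :
    unitSphere (2 * k + 2) :=
  ⟨normalize (diffLast (2 * k + 2) (coordDiff x.1)), by
    simpa [unitSphere] using diffLast_ne_zero (isBalanced_coordDiff x.2) (sum_abs_coordDiff x.2)⟩

theorem continuous_delJoinSkelToSphere : Continuous (delJoinSkelToSphere k) := by
  have hz : Continuous fun x : realization (delJoin (skel (2 * k + 3) k)) =>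
      diffLast (2 * k + 2) (coordDiff x.1) :=
    (diffLast _).continuous_of_finiteDimensional.comp <| continuous_pi fun i =>
      ((continuous_apply (Sum.inl i)).comp continuous_subtype_val).sub
        ((continuous_apply (Sum.inr i)).comp continuous_subtype_val)
  refine Continuous.subtype_mk ((hz.norm.inv₀ fun x => ?_).smul hz) _
  exact norm_ne_zero_iff.mpr <|
    diffLast_ne_zero (isBalanced_coordDiff x.2) (sum_abs_coordDiff x.2)

theorem delJoinSkelToSphere_injective : Function.Injective (delJoinSkelToSphere k) := by
  intro x y h
  rw [Subtype.ext_iff, ← sum_elim_posPart_negPart_coordDiff x.2,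
    ← sum_elim_posPart_negPart_coordDiff y.2, eq_of_normalize_diffLast_eq
      (isBalanced_coordDiff x.2) (isBalanced_coordDiff y.2) (sum_abs_coordDiff x.2)
      (sum_abs_coordDiff y.2) congr(($h).1)]

theorem delJoinSkelToSphere_surjective : Function.Surjective (delJoinSkelToSphere k) := by
  rintro ⟨ζ, hζ⟩
  have hζ1 : ‖ζ‖ = 1 := by simpa [unitSphere] using hζ
  obtain ⟨c, hc⟩ := exists_isBalanced_sub_const (Fintype.card_fin _)
    (Fin.snoc (α := fun _ => ℝ) (fun j => ζ j) 0)
  set d₀ : Fin (2 * k + 3) → ℝ := fun i =>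
    Fin.snoc (α := fun _ => ℝ) (fun j => ζ j) 0 i - c
  have hd₀ : diffLast (2 * k + 2) d₀ = ζ := by
    rw [diffLast_sub_const, diffLast_snoc_zero]
  set S := ∑ i, |d₀ i|
  have hS : 0 < S := by
    refine (sum_nonneg fun i _ => abs_nonneg _).lt_of_ne' fun hS => ?_
    have : d₀ = 0 := funext fun i =>
      abs_eq_zero.mp ((sum_eq_zero_iff_of_nonneg fun i _ => abs_nonneg _).mp hS i (mem_univ i))
    simp [this, ← hd₀] at hζ1
  have hd : IsBalanced k (S⁻¹ • d₀) := hc.smul (inv_pos.mpr hS)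
  have hd1 : ∑ i, |(S⁻¹ • d₀) i| = 1 := by
    simp [abs_mul, ← mul_sum, abs_of_pos hS, hS.ne', S]
  refine ⟨⟨_, sum_elim_posPart_negPart_mem_realization hd hd1⟩, Subtype.ext ?_⟩
  simp only [delJoinSkelToSphere, coordDiff_sum_elim, posPart_sub_negPart, map_smul, hd₀,
    NormedSpace.normalize_smul_of_pos (inv_pos.mpr hS),
    NormedSpace.normalize_eq_self_of_norm_eq_one hζ1]

theorem delJoinSkelToSphere_comp_swap {x y : realization (delJoin (skel (2 * k + 3) k))}
    (h : x.1 = y.1 ∘ Sum.swap) :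
    (delJoinSkelToSphere k x : EuclideanSpace ℝ (Fin (2 * k + 2))) =
      -delJoinSkelToSphere k y := by
  simp only [delJoinSkelToSphere, h, coordDiff_comp_swap, map_neg, NormedSpace.normalize_neg]

end SphereMap

/-- the simplicial deleted join of the `k`-skeleton of the
`(2k+2)`-simplex is `ℤ/2`-equivariantly homeomorphic to `S^{2k+1}` with the
antipodal involution. -/
theorem stmt7 (k : ℕ) :
    ∃ h : ↥(realization (delJoin (skel (2 * k + 3) k))) ≃ₜ ↥(unitSphere (2 * k + 2)),
      ∀ x y : ↥(realization (delJoin (skel (2 * k + 3) k))),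
        ((x : Fin (2 * k + 3) ⊕ Fin (2 * k + 3) → ℝ) =
          fun v => (y : Fin (2 * k + 3) ⊕ Fin (2 * k + 3) → ℝ) (Sum.swap v)) →
        (h x : EuclideanSpace ℝ (Fin (2 * k + 2))) =
          -(h y : EuclideanSpace ℝ (Fin (2 * k + 2))) := by
  have : CompactSpace (realization (delJoin (skel (2 * k + 3) k))) :=
    isCompact_iff_compactSpace.mp (isCompact_realization _)
  let e := Equiv.ofBijective (delJoinSkelToSphere k)
    ⟨delJoinSkelToSphere_injective, delJoinSkelToSphere_surjective⟩
  exact ⟨continuous_delJoinSkelToSphere.homeoOfEquivCompactToT2 (f := e),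
    fun x y h => delJoinSkelToSphere_comp_swap h⟩
end
end

section
/- Let K, L be finite simplicial complexes and let g: |K * L| → R^{d+q} × [0,1] be a level-preserving embedding, i.e., g([x,y,t]) ∈ R^{d+q} × {t} for all x ∈ K, y ∈ L, t ∈ [0,1], and define f₀ on |K*L| by g([x,y,t]) = (f₀([x,y,t]), t). Then the map sending ((x,x'),(y,y'),t) to (f₀([x,y,t]) − f₀([x',y',t]))/‖f₀([x,y,t]) − f₀([x',y',t])‖ is a well-defined continuous Z_2-equivariant map from the join K^{×2}_Δ * L^{×2}_Δ to S^{d+q-1}. -/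
/- Common infrastructure: spheres with antipodal involution, deleted products,
topological joins and suspensions with induced involutions, abstract simplicial
complexes (as down-closed set systems), geometric realizations, simplicial joins,
deleted joins, cones, skeleta and links. -/

open Metric

noncomputable section

section Aux
variable {V W : Type*} [Fintype V] [Fintype W] [DecidableEq V] [DecidableEq W]
  {K : Set (Finset V)} {L : Set (Finset W)}

lemma jpt_mem (hK : IsComplex K) (hL : IsComplex L)
    {x : V → ℝ} {y : W → ℝ} (hx : x ∈ realization K) (hy : y ∈ realization L) (t : I01) :
    jpt x y t ∈ realization (sJoin K L) := by
  obtain ⟨hx0, hx1, σ, hσ, hxs⟩ := hx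
  obtain ⟨hy0, hy1, τ, hτ, hys⟩ := hy
  refine ⟨?_, ?_, ?_⟩
  · rintro (v | w)
    · exact mul_nonneg (by linarith [t.2.2]) (hx0 v)
    · exact mul_nonneg t.2.1 (hy0 w)
  · rw [Fintype.sum_sum_type]
    simp only [jpt, Sum.elim_inl, Sum.elim_inr, ← Finset.mul_sum, hx1, hy1]
    ring
  · refine ⟨σ.image Sum.inl ∪ τ.image Sum.inr,
      ⟨?_, σ, τ, Or.inl hσ, Or.inl hτ, rfl⟩, ?_⟩
    · obtain ⟨v, hv⟩ := hK.1 σ hσ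
      exact ⟨Sum.inl v, Finset.mem_union_left _ (Finset.mem_image_of_mem _ hv)⟩
    · rintro (v | w) h
      · exact Finset.mem_union_left _ (Finset.mem_image_of_mem _
          (hxs v (by simpa [jpt] using right_ne_zero_of_mul h)))
      · exact Finset.mem_union_right _ (Finset.mem_image_of_mem _
          (hys w (by simpa [jpt] using right_ne_zero_of_mul h)))

lemma jpt_ne {x x' : V → ℝ} {y y' : W → ℝ} (hx : x ≠ x') (hy : y ≠ y') (t : I01) :
    jpt x y t ≠ jpt x' y' t := by
  intro h
  rcases eq_or_lt_of_le t.2.2 with h1 | h1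
  · refine hy (funext fun w => ?_)
    have := congrFun h (Sum.inr w)
    rw [jpt, jpt, Sum.elim_inr, Sum.elim_inr, h1, one_mul, one_mul] at this
    exact this
  · refine hx (funext fun v => ?_)
    have := congrFun h (Sum.inl v)
    simp only [jpt, Sum.elim_inl] at this
    have h2 : (1 : ℝ) - (t : ℝ) ≠ 0 := by linarith
    exact mul_left_cancel₀ h2 this

lemma jpt_zero {x : V → ℝ} {y y' : W → ℝ} (t : I01) (ht : t = 0) :
    jpt x y t = jpt x y' t := by
  subst ht
  funext z; cases z <;> simp [jpt]

lemma jpt_one {x x' : V → ℝ} {y : W → ℝ} (t : I01) (ht : t = 1) :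
    jpt x y t = jpt x' y t := by
  subst ht
  funext z; cases z <;> simp [jpt]

end Aux

section Gauss
variable {V W : Type*} [Fintype V] [Fintype W] [DecidableEq V] [DecidableEq W]
  {K : Set (Finset V)} {L : Set (Finset W)}

/-- The first component of `g` at the join point `[x,y,t]`. -/
def gPt (hK : IsComplex K) (hL : IsComplex L) (d q : ℕ)
    (g : ↥(realization (sJoin K L)) → EuclideanSpace ℝ (Fin (d + q)) × ℝ)
    (x : ↥(realization K)) (y : ↥(realization L)) (t : I01) :
    EuclideanSpace ℝ (Fin (d + q)) :=
  (g ⟨jpt (x : V → ℝ) (y : W → ℝ) t, jpt_mem hK hL x.2 y.2 t⟩).1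

lemma gPt_zero (hK : IsComplex K) (hL : IsComplex L) (d q : ℕ)
    (g : ↥(realization (sJoin K L)) → EuclideanSpace ℝ (Fin (d + q)) × ℝ)
    (x : ↥(realization K)) (y y' : ↥(realization L)) :
    gPt hK hL d q g x y 0 = gPt hK hL d q g x y' 0 :=
  congrArg (fun z => (g z).1) (Subtype.ext (jpt_zero (0 : I01) rfl))

lemma gPt_one (hK : IsComplex K) (hL : IsComplex L) (d q : ℕ)
    (g : ↥(realization (sJoin K L)) → EuclideanSpace ℝ (Fin (d + q)) × ℝ)
    (x x' : ↥(realization K)) (y : ↥(realization L)) :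
    gPt hK hL d q g x y 1 = gPt hK hL d q g x' y 1 :=
  congrArg (fun z => (g z).1) (Subtype.ext (jpt_one (1 : I01) rfl))

/-- The Gauss difference vector. -/
def gDiff (hK : IsComplex K) (hL : IsComplex L) (d q : ℕ)
    (g : ↥(realization (sJoin K L)) → EuclideanSpace ℝ (Fin (d + q)) × ℝ)
    (a : DelProd ↥(realization K) × DelProd ↥(realization L) × I01) :
    EuclideanSpace ℝ (Fin (d + q)) :=
  gPt hK hL d q g a.1.1.1 a.2.1.1.1 a.2.2 - gPt hK hL d q g a.1.1.2 a.2.1.1.2 a.2.2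

lemma gDiff_ne (hK : IsComplex K) (hL : IsComplex L) (d q : ℕ)
    (g : ↥(realization (sJoin K L)) → EuclideanSpace ℝ (Fin (d + q)) × ℝ)
    (hg : Function.Injective g)
    (hlevel : ∀ z : ↥(realization (sJoin K L)),
      (g z).2 = ∑ w, (z : V ⊕ W → ℝ) (Sum.inr w))
    (a : DelProd ↥(realization K) × DelProd ↥(realization L) × I01) :
    gDiff hK hL d q g a ≠ 0 := by
  obtain ⟨p, r, t⟩ := a
  intro h
  rw [gDiff, sub_eq_zero] at h
  have hlev : ∀ (x : ↥(realization K)) (y : ↥(realization L)),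
      (g ⟨jpt (x : V → ℝ) (y : W → ℝ) t, jpt_mem hK hL x.2 y.2 t⟩).2 = (t : ℝ) := by
    intro x y
    rw [hlevel]
    simp only [jpt, Sum.elim_inr]
    rw [← Finset.mul_sum, y.2.2.1, mul_one]
  have hzne : (⟨jpt (p.1.1 : V → ℝ) (r.1.1 : W → ℝ) t, jpt_mem hK hL p.1.1.2 r.1.1.2 t⟩ :
        ↥(realization (sJoin K L))) ≠
      ⟨jpt (p.1.2 : V → ℝ) (r.1.2 : W → ℝ) t, jpt_mem hK hL p.1.2.2 r.1.2.2 t⟩ := by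
    intro e
    exact jpt_ne (fun e' => p.2 (Subtype.ext e')) (fun e' => r.2 (Subtype.ext e')) t
      (congrArg Subtype.val e)
  exact hzne (hg (Prod.ext h (by rw [hlev, hlev])))

/-- The normalized Gauss map. -/
def gaussF1 (hK : IsComplex K) (hL : IsComplex L) (d q : ℕ)
    (g : ↥(realization (sJoin K L)) → EuclideanSpace ℝ (Fin (d + q)) × ℝ)
    (hne : ∀ a, gDiff hK hL d q g a ≠ 0)
    (a : DelProd ↥(realization K) × DelProd ↥(realization L) × I01) :
    ↥(unitSphere (d + q)) :=
  ⟨‖gDiff hK hL d q g a‖⁻¹ • gDiff hK hL d q g a, by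
    simp only [unitSphere, mem_sphere_zero_iff_norm, norm_smul, norm_inv, norm_norm]
    exact inv_mul_cancel₀ (norm_ne_zero_iff.2 (hne a))⟩

end Gauss

/-- for a level-preserving embedding `g` of `|K * L|` into
`ℝ^{d+q} × [0,1]`, the Gauss-type formula defines a continuous `ℤ/2`-equivariant map
`K^{×2}_Δ * L^{×2}_Δ → S^{d+q-1}`. -/
theorem stmt13 {V W : Type*} [Fintype V] [Fintype W] [DecidableEq V] [DecidableEq W]
    (K : Set (Finset V)) (L : Set (Finset W)) (hK : IsComplex K) (hL : IsComplex L)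
    (d q : ℕ)
    (g : ↥(realization (sJoin K L)) → EuclideanSpace ℝ (Fin (d + q)) × ℝ)
    (hg : Topology.IsEmbedding g)
    (hlevel : ∀ z : ↥(realization (sJoin K L)),
      (g z).2 = ∑ w, (z : V ⊕ W → ℝ) (Sum.inr w)) :
    ∃ F : TopJoin (DelProd ↥(realization K)) (DelProd ↥(realization L)) →
        ↥(unitSphere (d + q)),
      Continuous F ∧
      (∀ z, (F (joinInvol delProdSwap delProdSwap z) : EuclideanSpace ℝ (Fin (d + q))) =
        -(F z : EuclideanSpace ℝ (Fin (d + q)))) ∧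
      ∀ (p : DelProd ↥(realization K)) (r : DelProd ↥(realization L)) (t : I01)
        (h1 : jpt ((p.1.1 : V → ℝ)) ((r.1.1 : W → ℝ)) t ∈ realization (sJoin K L))
        (h2 : jpt ((p.1.2 : V → ℝ)) ((r.1.2 : W → ℝ)) t ∈ realization (sJoin K L)),
        (F (Quot.mk _ (p, r, t)) : EuclideanSpace ℝ (Fin (d + q))) =
          ‖(g ⟨_, h1⟩).1 - (g ⟨_, h2⟩).1‖⁻¹ • ((g ⟨_, h1⟩).1 - (g ⟨_, h2⟩).1) := by
    classical
  have hne := gDiff_ne hK hL d q g hg.injective hlevel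
  set F1 := gaussF1 hK hL d q g hne with hF1
  have hsound : ∀ a b, JoinRel (DelProd ↥(realization K)) (DelProd ↥(realization L)) a b →
      F1 a = F1 b := by
    rintro ⟨p, r, t⟩ ⟨p', r', t'⟩ (⟨h0a, h0b, hab⟩ | ⟨h1a, h1b, hab⟩)
    · obtain rfl : t = 0 := h0a
      obtain rfl : t' = 0 := h0b
      obtain rfl : p = p' := hab
      have hd : gDiff hK hL d q g (p, r, 0) = gDiff hK hL d q g (p, r', 0) := by
        simp only [gDiff]
        rw [gPt_zero hK hL d q g p.1.1 r.1.1 r'.1.1, gPt_zero hK hL d q g p.1.2 r.1.2 r'.1.2]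
      exact Subtype.ext (by simp only [hF1, gaussF1, hd])
    · obtain rfl : t = 1 := h1a
      obtain rfl : t' = 1 := h1b
      obtain rfl : r = r' := hab
      have hd : gDiff hK hL d q g (p, r, 1) = gDiff hK hL d q g (p', r, 1) := by
        simp only [gDiff]
        rw [gPt_one hK hL d q g p.1.1 p'.1.1 r.1.1, gPt_one hK hL d q g p.1.2 p'.1.2 r.1.2]
      exact Subtype.ext (by simp only [hF1, gaussF1, hd])
  refine ⟨Quot.lift F1 hsound, ?_, ?_, ?_⟩
  · -- continuity
    have hjc : Continuous (fun a : ↥(realization K) × ↥(realization L) × I01 =>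
        jpt (a.1 : V → ℝ) (a.2.1 : W → ℝ) a.2.2) := by
      apply continuous_pi
      rintro (v | w)
      · show Continuous fun a : ↥(realization K) × ↥(realization L) × I01 =>
          (1 - (a.2.2 : ℝ)) * (a.1 : V → ℝ) v
        exact (continuous_const.sub
            (continuous_subtype_val.comp (continuous_snd.comp continuous_snd))).mul
          ((continuous_apply v).comp (continuous_subtype_val.comp continuous_fst))
      · show Continuous fun a : ↥(realization K) × ↥(realization L) × I01 =>
          ((a.2.2 : ℝ)) * (a.2.1 : W → ℝ) w
        exact (continuous_subtype_val.comp (continuous_snd.comp continuous_snd)).mul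
          ((continuous_apply w).comp
            (continuous_subtype_val.comp (continuous_fst.comp continuous_snd)))
    have hgP : Continuous (fun a : ↥(realization K) × ↥(realization L) × I01 =>
        gPt hK hL d q g a.1 a.2.1 a.2.2) :=
      (hg.continuous.comp (hjc.subtype_mk _)).fst
    have hproj1 : Continuous
        (fun a : DelProd ↥(realization K) × DelProd ↥(realization L) × I01 =>
          (a.1.1.1, a.2.1.1.1, a.2.2)) := by fun_prop
    have hproj2 : Continuous
        (fun a : DelProd ↥(realization K) × DelProd ↥(realization L) × I01 =>
          (a.1.1.2, a.2.1.1.2, a.2.2)) := by fun_prop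
    have hgd : Continuous (gDiff hK hL d q g) :=
      (hgP.comp hproj1).sub (hgP.comp hproj2)
    have hF1c : Continuous F1 := by
      apply Continuous.subtype_mk
      exact ((hgd.norm.inv₀ (fun a => norm_ne_zero_iff.2 (hne a))).smul hgd)
    exact continuous_quot_lift hsound hF1c
  · -- equivariance
    intro z
    induction z using Quot.ind with
    | _ a =>
      obtain ⟨p, r, t⟩ := a
      have hd : gDiff hK hL d q g (delProdSwap p, delProdSwap r, t) =
          -gDiff hK hL d q g (p, r, t) := (neg_sub _ _).symm
      show (F1 (delProdSwap p, delProdSwap r, t) : EuclideanSpace ℝ (Fin (d + q))) =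
        -(F1 (p, r, t) : EuclideanSpace ℝ (Fin (d + q)))
      simp only [hF1, gaussF1, hd, norm_neg, smul_neg]
  · intro p r t h1 h2
    rfl
end
end
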